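/- (Corollary, second part) Let Γ be the subgroup of GL(4, ℤ) generated by A and T. If X ∈ Γ is not the identity and has finite order, then the order of X is 5 and the characteristic polynomial of X is x^4 + x^3 + x^2 + x + 1 (the fifth cyclotomic polynomial); in particular the eigenvalues of X are exactly the four primitive 5th roots of unity. -/

import Mathlib

/-!
Modulo 5, `A` and `T` are unipotent with respect to a common flag, so `Γ` reduces into a unipotent
subgroup of `GL(4, 𝔽₅)`, in which `g⁵ - 1 = (g - 1)⁵ = 0`. Hence `X⁵ ≡ 1 (mod 5)`.

Minkowski: reduction modulo an odd prime `p` is injective on the torsion of `GL(n, ℤ)`.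
If `Z ^ q = 1` and `Z ≡ 1 (mod p)`, then `(Z - 1) * S = 0` for `S = 1 + Z + ⋯ + Z ^ (q - 1)`.
If `p ∤ q` then `S ≡ q (mod p)`; if `q = p` then `S ≡ p (mod p²)` (using that `p` is odd).
Either way `S` or `S / p` has determinant prime to `p`, which forces `Z = 1`. So `X⁵ = 1`.

Finally the minimal polynomial of `X ≠ 1` divides `Φ₅ * (X - 1)` but not `X - 1`, so the irreducible
`Φ₅` divides it, and by degrees `Φ₅` is the characteristic polynomial.
-/

open Matrix Polynomial

/-- The local monodromy of the quintic-mirror family around `λ = 0`. -/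
def A : Matrix (Fin 4) (Fin 4) ℤ :=
  !![11, 8, -5, 0; 5, -4, -3, 1; 20, 15, -9, 0; 5, -5, -3, 1]

/-- The local monodromy of the quintic-mirror family around `λ = 1`. -/
def T : Matrix (Fin 4) (Fin 4) ℤ :=
  !![1, 0, 0, 0; 0, 1, 0, -1; 0, 0, 1, 0; 0, 0, 0, 1]

/-- `A` as an element of `GL(4, ℤ)`. -/
def AGL : GL (Fin 4) ℤ :=
  ⟨A, !![-9, -3, 5, 3; 0, 1, 0, -1; -20, -5, 11, 5; -15, 5, 8, -4],
    by decide, by decide⟩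

/-- `T` as an element of `GL(4, ℤ)`. -/
def TGL : GL (Fin 4) ℤ :=
  ⟨T, !![1, 0, 0, 0; 0, 1, 0, 1; 0, 0, 1, 0; 0, 0, 0, 1],
    by decide, by decide⟩

open Finset

theorem geom_sum_one_add_nsmul_eq {R : Type*} [Ring R] {p : ℕ} (hp : Odd p)
    (hp2 : ((p ^ 2 : ℕ) : R) = 0) (y : R) : ∑ i ∈ range p, (1 + p • y) ^ i = p := by
  have hsq : p • y * p • y = 0 := by
    rw [smul_mul_smul, ← sq, nsmul_eq_mul, hp2, zero_mul]
  have hpow (i : ℕ) : (1 + p • y) ^ i = 1 + i • p • y := by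
    induction i with
    | zero => simp
    | succ i ih =>
      rw [pow_succ, ih, add_mul, one_mul, smul_mul_assoc, mul_add, mul_one, hsq, add_zero,
        succ_nsmul]
      abel
  obtain ⟨k, rfl⟩ := hp
  have hgauss : ∑ i ∈ range (2 * k + 1), i = k * (2 * k + 1) := by
    have := sum_range_id_mul_two (2 * k + 1)
    rw [Nat.add_sub_cancel] at this
    linarith
  have hp2y : (2 * k + 1) • (2 * k + 1) • y = 0 := by
    rw [smul_smul, ← sq, nsmul_eq_mul, hp2, zero_mul]
  rw [sum_congr rfl fun i _ => hpow i, sum_add_distrib, sum_const, card_range, ← sum_smul, hgauss,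
    mul_smul, hp2y, smul_zero, add_zero, nsmul_one]

namespace Matrix

variable {n α R : Type*}

def StrictBlockTriangular [Zero R] [LE α] (M : Matrix n n R) (b : n → α) : Prop :=
  ∀ ⦃i j⦄, b j ≤ b i → M i j = 0

instance [Fintype n] [Zero R] [DecidableEq R] [LE α] [DecidableLE α] (M : Matrix n n R)
    (b : n → α) : Decidable (M.StrictBlockTriangular b) := by
  unfold StrictBlockTriangular
  -- instance search does not find the inner instance under the binder
  have (i : n) : Decidable (∀ j, b j ≤ b i → M i j = 0) := Fintype.decidableForallFintype
  exact Fintype.decidableForallFintype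

theorem StrictBlockTriangular.blockTriangular [Zero R] [Preorder α] {M : Matrix n n R}
    {b : n → α} (hM : M.StrictBlockTriangular b) : M.BlockTriangular b :=
  fun _ _ hij => hM hij.le

theorem StrictBlockTriangular.add [AddZeroClass R] [LE α] {M N : Matrix n n R} {b : n → α}
    (hM : M.StrictBlockTriangular b) (hN : N.StrictBlockTriangular b) :
    (M + N).StrictBlockTriangular b := fun _ _ hij => by
  rw [add_apply, hM hij, hN hij, add_zero]

theorem StrictBlockTriangular.neg [NegZeroClass R] [LE α] {M : Matrix n n R} {b : n → α}
    (hM : M.StrictBlockTriangular b) : (-M).StrictBlockTriangular b := fun _ _ hij => by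
  rw [neg_apply, hM hij, neg_zero]

theorem blockTriangular_of_strictBlockTriangular_sub_one [DecidableEq n] [AddGroupWithOne R]
    [Preorder α] {M : Matrix n n R} {b : n → α} (hM : (M - 1).StrictBlockTriangular b) :
    M.BlockTriangular b := by
  simpa using hM.blockTriangular.add blockTriangular_one

theorem BlockTriangular.mul_strictBlockTriangular [Fintype n] [NonUnitalNonAssocSemiring R]
    [LinearOrder α] {M N : Matrix n n R} {b : n → α} (hM : M.BlockTriangular b)
    (hN : N.StrictBlockTriangular b) : (M * N).StrictBlockTriangular b := by
  intro i j hji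
  rw [mul_apply]
  refine Finset.sum_eq_zero fun k _ => ?_
  rcases lt_or_ge (b k) (b i) with hki | hik
  · rw [hM hki, zero_mul]
  · rw [hN (hji.trans hik), mul_zero]

theorem StrictBlockTriangular.pow_apply_eq_zero [Fintype n] [DecidableEq n] [Semiring R]
    {N : Matrix n n R} {b : n → ℕ} (hN : N.StrictBlockTriangular b) (d : ℕ) {i j : n}
    (hij : b j < b i + d) : (N ^ d) i j = 0 := by
  induction d generalizing j with
  | zero => exact one_apply_ne fun h => by subst h; omega
  | succ d ih =>
    rw [pow_succ, mul_apply]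
    refine Finset.sum_eq_zero fun k _ => ?_
    rcases lt_or_ge (b k) (b i + d) with hk | hk
    · rw [ih hk, zero_mul]
    · rw [hN (by omega), mul_zero]

theorem StrictBlockTriangular.pow_eq_zero [Fintype n] [DecidableEq n] [Semiring R]
    {N : Matrix n n R} {b : n → ℕ} (hN : N.StrictBlockTriangular b) {m : ℕ}
    (hb : ∀ i, b i < m) : N ^ m = 0 := by
  ext i j
  exact hN.pow_apply_eq_zero m ((hb j).trans_le (Nat.le_add_left m (b i)))

section

variable [Fintype n] [DecidableEq n]

theorem eq_zero_of_mul_eq_zero_of_det_ne_zero {R : Type*} [CommRing R] [IsDomain R]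
    {K S : Matrix n n R} (h : K * S = 0) (hS : S.det ≠ 0) : K = 0 := by
  have hK : S.det • K = 0 := by
    rw [← mul_one K, ← mul_smul_comm, ← mul_adjugate, ← mul_assoc, h, zero_mul]
  exact (smul_eq_zero.1 hK).resolve_left hS

theorem det_ne_zero_of_det_mapMatrix_ne_zero {R S : Type*} [CommRing R] [CommRing S]
    (f : R →+* S) {M : Matrix n n R} (hM : (f.mapMatrix M).det ≠ 0) : M.det ≠ 0 :=
  fun h => hM (by rw [← RingHom.map_det, h, map_zero])

theorem exists_eq_smul_of_mapMatrix_eq_zero {m : ℕ} {K : Matrix n n ℤ}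
    (h : (Int.castRingHom (ZMod m)).mapMatrix K = 0) :
    ∃ K' : Matrix n n ℤ, K = (m : ℤ) • K' := by
  have hdvd (i j : n) : (m : ℤ) ∣ K i j :=
    (ZMod.intCast_zmod_eq_zero_iff_dvd _ _).1 (congrFun (congrFun h i) j)
  choose K' hK' using hdvd
  exact ⟨Matrix.of K', by ext i j; simp [hK']⟩

theorem eq_one_of_pow_eq_one_of_not_dvd {p q : ℕ} [Fact p.Prime] {Z : Matrix n n ℤ}
    (hZ : Z ^ q = 1) (hpq : ¬ p ∣ q) (hZp : (Int.castRingHom (ZMod p)).mapMatrix Z = 1) :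
    Z = 1 := by
  have hkill : (Z - 1) * ∑ i ∈ range q, Z ^ i = 0 := by rw [mul_geom_sum, hZ, sub_self]
  have hsum :
      (Int.castRingHom (ZMod p)).mapMatrix (∑ i ∈ range q, Z ^ i) = (q : ZMod p) • 1 := by
    rw [map_sum]
    simp only [map_pow, hZp, one_pow, sum_const, card_range, Nat.cast_smul_eq_nsmul]
  refine sub_eq_zero.1 (eq_zero_of_mul_eq_zero_of_det_ne_zero hkill
    (det_ne_zero_of_det_mapMatrix_ne_zero (Int.castRingHom (ZMod p)) ?_))
  rw [hsum, det_smul, det_one, mul_one]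
  exact pow_ne_zero _ ((ZMod.natCast_eq_zero_iff _ _).not.2 hpq)

theorem exists_geom_sum_eq_smul_one_add_smul {p : ℕ} (hp : Odd p) {Z : Matrix n n ℤ}
    (hZp : (Int.castRingHom (ZMod p)).mapMatrix Z = 1) :
    ∃ R : Matrix n n ℤ, ∑ i ∈ range p, Z ^ i = (p : ℤ) • (1 + (p : ℤ) • R) := by
  obtain ⟨N, hN⟩ := exists_eq_smul_of_mapMatrix_eq_zero (m := p) (K := Z - 1)
    (by rw [map_sub, hZp, map_one, sub_self])
  have hmod : (Int.castRingHom (ZMod (p ^ 2))).mapMatrix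
      (∑ i ∈ range p, Z ^ i - (p : Matrix n n ℤ)) = 0 := by
    have hchar : ((p ^ 2 : ℕ) : Matrix n n (ZMod (p ^ 2))) = 0 := by
      rw [← diagonal_natCast, ZMod.natCast_self, diagonal_zero]
    have hZ2 : (Int.castRingHom (ZMod (p ^ 2))).mapMatrix Z =
        1 + p • (Int.castRingHom (ZMod (p ^ 2))).mapMatrix N := by
      rw [eq_add_of_sub_eq' hN, map_add, map_one, map_zsmul, natCast_zsmul]
    rw [map_sub, map_sum]
    simp only [map_pow, hZ2, geom_sum_one_add_nsmul_eq hp hchar, map_natCast, sub_self]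
  obtain ⟨R, hR⟩ := exists_eq_smul_of_mapMatrix_eq_zero hmod
  refine ⟨R, ?_⟩
  rw [sub_eq_iff_eq_add] at hR
  rw [hR, smul_add, smul_smul, add_comm, Nat.cast_pow, sq]
  simp

theorem eq_one_of_pow_eq_one_of_odd_prime {p : ℕ} [Fact p.Prime] (hp : Odd p)
    {Z : Matrix n n ℤ} (hZ : Z ^ p = 1) (hZp : (Int.castRingHom (ZMod p)).mapMatrix Z = 1) :
    Z = 1 := by
  obtain ⟨R, hR⟩ := exists_geom_sum_eq_smul_one_add_smul hp hZp
  have hkill : (p : ℤ) • ((Z - 1) * (1 + (p : ℤ) • R)) = 0 := by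
    rw [← mul_smul_comm, ← hR, mul_geom_sum, hZ, sub_self]
  have hunit : (Int.castRingHom (ZMod p)).mapMatrix (1 + (p : ℤ) • R) = 1 := by
    rw [map_add, map_one, map_zsmul, natCast_zsmul,
      ← Nat.cast_smul_eq_nsmul (ZMod p), ZMod.natCast_self, zero_smul, add_zero]
  refine sub_eq_zero.1 (eq_zero_of_mul_eq_zero_of_det_ne_zero
    ((smul_eq_zero.1 hkill).resolve_left (by exact_mod_cast (Fact.out : p.Prime).ne_zero))
    (det_ne_zero_of_det_mapMatrix_ne_zero (Int.castRingHom (ZMod p)) ?_))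
  rw [hunit, det_one]
  exact one_ne_zero

theorem charpoly_eq_cyclotomic_of_pow_eq_one {p : ℕ} [hp : Fact p.Prime] {M : Matrix n n ℤ}
    (hcard : Fintype.card n = p - 1) (hM : M ^ p = 1) (hne : M ≠ 1) :
    M.charpoly = cyclotomic p ℤ := by
  set Mq := (Int.castRingHom ℚ).mapMatrix M
  have hMq : Mq ≠ 1 := fun h => hne <|
    Matrix.map_injective Int.cast_injective (h.trans (map_one (Int.castRingHom ℚ).mapMatrix).symm)
  have hdvd : cyclotomic p ℚ ∣ minpoly ℚ Mq := by
    by_contra h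
    have hcop := ((cyclotomic.irreducible_rat hp.out.pos).coprime_iff_not_dvd).2 h
    have hroot : minpoly ℚ Mq ∣ cyclotomic p ℚ * (X - 1) := by
      rw [cyclotomic_prime_mul_X_sub_one, minpoly.dvd_iff, map_sub, map_pow, aeval_X, map_one,
        ← map_pow, hM, map_one, sub_self]
    have := minpoly.dvd_iff.1 (hcop.symm.dvd_of_dvd_mul_left hroot)
    rw [map_sub, aeval_X, map_one, sub_eq_zero] at this
    exact hMq this
  have hcharq : Mq.charpoly = cyclotomic p ℚ :=
    eq_of_monic_of_dvd_of_natDegree_le (cyclotomic.monic p ℚ) (charpoly_monic Mq)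
      (hdvd.trans (minpoly_dvd_charpoly Mq))
      (by rw [charpoly_natDegree_eq_dim, natDegree_cyclotomic, Nat.totient_prime hp.out, hcard])
  apply Polynomial.map_injective (Int.castRingHom ℚ) Int.cast_injective
  rw [← charpoly_map, map_cyclotomic]
  exact hcharq

end

namespace GeneralLinearGroup

variable [Fintype n] [DecidableEq n] [CommRing R] [LinearOrder α]

def unipotentSubgroup (b : n → α) : Subgroup (GL n R) where
  carrier := {g | ((g : Matrix n n R) - 1).StrictBlockTriangular b}
  one_mem' := by simp [StrictBlockTriangular]
  mul_mem' {g h} hg hh := by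
    have : ((g * h : GL n R) : Matrix n n R) - 1 = g * (h - 1) + (g - 1) := by
      push_cast; noncomm_ring
    rw [Set.mem_ofPred_eq, this]
    exact
      ((blockTriangular_of_strictBlockTriangular_sub_one hg).mul_strictBlockTriangular hh).add hg
  inv_mem' {g} hg := by
    have : ((g⁻¹ : GL n R) : Matrix n n R) - 1 =
        -((g⁻¹ : GL n R) * ((g : Matrix n n R) - 1)) := by
      rw [mul_sub, mul_one, Units.inv_mul]; abel
    have hinv : ((g⁻¹ : GL n R) : Matrix n n R).BlockTriangular b := by
      rw [coe_units_inv]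
      let := g.invertible
      exact blockTriangular_inv_of_blockTriangular
        (blockTriangular_of_strictBlockTriangular_sub_one hg)
    rw [Set.mem_ofPred_eq, this]
    exact (hinv.mul_strictBlockTriangular hg).neg

theorem pow_eq_one_of_mem_unipotentSubgroup [Nonempty n] {p : ℕ} [Fact p.Prime] [CharP R p]
    {b : n → ℕ} (hb : ∀ i, b i < p) {g : GL n R} (hg : g ∈ unipotentSubgroup b) : g ^ p = 1 := by
  ext1
  rw [Units.val_pow_eq_pow_val, Units.val_one, ← sub_eq_zero, ← one_pow p,
    ← sub_pow_char_of_commute (p := p) (Commute.one_right _)]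
  exact StrictBlockTriangular.pow_eq_zero hg hb

theorem eq_one_of_isOfFinOrder_of_map_eq_one {p : ℕ} [Fact p.Prime] (hp : Odd p) {g : GL n ℤ}
    (hg : IsOfFinOrder g) (hgp : map (Int.castRingHom (ZMod p)) g = 1) : g = 1 := by
  by_contra hne
  obtain ⟨q, hq, hdvd⟩ := Nat.exists_prime_and_dvd (orderOf_eq_one_iff.not.2 hne)
  have hord := orderOf_pow_orderOf_div hg.orderOf_pos.ne' hdvd
  set y := g ^ (orderOf g / q)
  have hyq : (y : Matrix n n ℤ) ^ q = 1 := by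
    rw [← Units.val_pow_eq_pow_val, ← hord, pow_orderOf_eq_one, Units.val_one]
  have hyp : (Int.castRingHom (ZMod p)).mapMatrix (y : Matrix n n ℤ) = 1 :=
    congrArg Units.val (by rw [map_pow, hgp, one_pow] : map (Int.castRingHom (ZMod p)) y = 1)
  have hy : y = 1 := by
    ext1
    by_cases hqp : q = p
    · subst hqp
      exact eq_one_of_pow_eq_one_of_odd_prime hp hyq hyp
    · exact eq_one_of_pow_eq_one_of_not_dvd hyq
        ((Nat.prime_dvd_prime_iff_eq Fact.out hq).not.2 (Ne.symm hqp)) hyp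
  rw [hy, orderOf_one] at hord
  exact hq.one_lt.ne hord

end GeneralLinearGroup

end Matrix

/-- `flagIndex i` is the step at which `e i` enters the flag `⟨e₀⟩ ⊂ ⟨e₀, e₁⟩ ⊂ ⟨e₀, e₁, e₃⟩`,
which `A` and `T` stabilize modulo 5, acting trivially on its successive quotients. -/
def flagIndex : Fin 4 → ℕ := ![0, 1, 3, 2]

theorem map_zmod_five_mem_unipotentSubgroup_of_mem_closure {X : GL (Fin 4) ℤ}
    (hX : X ∈ Subgroup.closure {AGL, TGL}) :
    GeneralLinearGroup.map (Int.castRingHom (ZMod 5)) X ∈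
      GeneralLinearGroup.unipotentSubgroup flagIndex := by
  have hgen : Subgroup.closure {AGL, TGL} ≤ (GeneralLinearGroup.unipotentSubgroup flagIndex).comap
      (GeneralLinearGroup.map (Int.castRingHom (ZMod 5))) := by
    rw [Subgroup.closure_le]
    rintro _ (rfl | rfl)
    · show StrictBlockTriangular (A.map (Int.cast : ℤ → ZMod 5) - 1) flagIndex
      decide
    · show StrictBlockTriangular (T.map (Int.cast : ℤ → ZMod 5) - 1) flagIndex
      decide
  exact hgen hX

theorem order_of_finite_order_monodromy (X : GL (Fin 4) ℤ)
    (hX : X ∈ Subgroup.closure {AGL, TGL}) (hne : X ≠ 1) (hfin : IsOfFinOrder X) :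
    orderOf X = 5 ∧
    (X : Matrix (Fin 4) (Fin 4) ℤ).charpoly =
      Polynomial.X ^ 4 + Polynomial.X ^ 3 + Polynomial.X ^ 2 + Polynomial.X + 1 ∧
    (X : Matrix (Fin 4) (Fin 4) ℤ).charpoly = Polynomial.cyclotomic 5 ℤ := by
  have : Fact (Nat.Prime 5) := ⟨by norm_num⟩
  have h5 : X ^ 5 = 1 := by
    refine GeneralLinearGroup.eq_one_of_isOfFinOrder_of_map_eq_one (p := 5) (by decide) hfin.pow ?_
    rw [map_pow]
    exact GeneralLinearGroup.pow_eq_one_of_mem_unipotentSubgroup (by decide)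
      (map_zmod_five_mem_unipotentSubgroup_of_mem_closure hX)
  have hchar : (X : Matrix (Fin 4) (Fin 4) ℤ).charpoly = cyclotomic 5 ℤ :=
    charpoly_eq_cyclotomic_of_pow_eq_one rfl (by rw [← Units.val_pow_eq_pow_val, h5, Units.val_one])
      (Units.val_eq_one.not.2 hne)
  refine ⟨orderOf_eq_prime h5 hne, ?_, hchar⟩
  rw [hchar, cyclotomic_prime, sum_range_succ, sum_range_succ, sum_range_succ, sum_range_succ,
    sum_range_one]
  ring
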